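/- For every θ ∈ (0,1) there exists a constant C > 0, depending only on θ, with the following property. Let γ > 0 and let ω : ℤ → ℝ be γ-Diophantine, i.e. for every nonzero finitely supported l : ℤ → ℤ one has dist(∑_n l_n·ω_n, ℤ) ≥ γ·∏_{n∈ℤ} (1 + l_n²·w(n)⁴)^{−1}. Then for every real B ≥ 2 and every nonzero finitely supported l : ℤ → ℤ with ∑_{n∈ℤ} |l_n|·w(n)^{θ/2} ≤ B, one has dist(∑_n l_n·ω_n, ℤ) ≥ γ·exp( −C·B^{3/(3+θ)} ). -/

import Mathlib

open scoped BigOperators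

/-- `w(n) = max(1, |n|)` as a real number. -/
noncomputable def wR (n : ℤ) : ℝ := max 1 |(n : ℝ)|

/-- Distance from a real number to the nearest integer. -/
noncomputable def distZ (x : ℝ) : ℝ := |x - round x|

/-!
A nonzero `l` with `∑ |lₙ| w(n)^{θ/2} ≤ B` has at most `O(B^{2/(2+θ)})` nonzero entries, because
`m` distinct integers have `∑ w(n)^{θ/2} ≳ m^{1 + θ/2}`; and each entry satisfies `|lₙ| ≤ B`,
`w(n) ≤ B^{2/θ}`. Hence every factor of the Diophantine product is at most `B^{3+8/θ}` and the
product is at most `exp (O(B^{2/(2+θ)} log B))`. The logarithm is absorbed by the gap between the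
exponents `2/(2+θ) < 3/(3+θ)`.
-/

open Finset

lemma one_le_wR (n : ℤ) : 1 ≤ wR n := le_max_left _ _

lemma abs_le_wR (n : ℤ) : |(n : ℝ)| ≤ wR n := le_max_right _ _

lemma wR_rpow_nonneg (n : ℤ) (s : ℝ) : 0 ≤ wR n ^ s :=
  Real.rpow_nonneg (zero_le_one.trans (one_le_wR n)) s

lemma one_le_abs_apply_of_mem_support {l : ℤ →₀ ℤ} {n : ℤ} (hn : n ∈ l.support) :
    1 ≤ |(l n : ℝ)| := by
  exact_mod_cast Int.one_le_abs (Finsupp.mem_support_iff.mp hn)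

lemma card_le_card_filter_lt_abs_add (S : Finset ℤ) (k : ℕ) :
    #S ≤ #(S.filter fun n => (k : ℤ) < |n|) + (2 * k + 1) := by
  rw [← card_filter_add_card_filter_not (s := S) (fun n => (k : ℤ) < |n|)]
  gcongr
  calc #(S.filter fun n => ¬ (k : ℤ) < |n|) ≤ #(Icc (-(k : ℤ)) k) :=
        card_le_card fun n hn => by
          simp only [mem_filter, not_lt] at hn
          exact mem_Icc.2 (abs_le.1 hn.2)
    _ = 2 * k + 1 := by rw [Int.card_Icc]; omega

/-- At most `2k + 1` of the `m` integers have `|n| ≤ k := m / 4`, so at least `m / 4` of them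
have `w(n) ≥ m / 4`. -/
lemma card_div_four_rpow_le_sum_wR_rpow (S : Finset ℤ) {s : ℝ} (hs : 0 ≤ s) :
    ((#S : ℝ) / 4) ^ (1 + s) ≤ ∑ n ∈ S, wR n ^ s := by
  obtain hm | hm := lt_or_ge #S 4
  · rcases S.eq_empty_or_nonempty with rfl | ⟨n, hn⟩
    · simp [Real.zero_rpow (by linarith : 1 + s ≠ 0)]
    calc ((#S : ℝ) / 4) ^ (1 + s) ≤ 1 :=
          Real.rpow_le_one (by positivity)
            (by rw [div_le_one (by norm_num)]; exact_mod_cast hm.le) (by linarith)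
      _ ≤ wR n ^ s := Real.one_le_rpow (one_le_wR n) hs
      _ ≤ ∑ n ∈ S, wR n ^ s := single_le_sum (fun n _ => wR_rpow_nonneg n s) hn
  set k := #S / 4 with hk
  set T := S.filter fun n => (k : ℤ) < |n|
  have hT : (#S : ℝ) / 4 ≤ #T := by
    have : #S ≤ #T + (2 * k + 1) := card_le_card_filter_lt_abs_add S k
    rw [div_le_iff₀ (by norm_num)]
    exact_mod_cast (by omega : #S ≤ #T * 4)
  have hwT : ∀ n ∈ T, (#S : ℝ) / 4 ≤ wR n := by
    intro n hn
    have hkn : (k : ℤ) + 1 ≤ |n| := (mem_filter.1 hn).2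
    have hkn' : (k : ℝ) + 1 ≤ |(n : ℝ)| := by exact_mod_cast hkn
    have hSk : (#S : ℝ) < 4 * (k + 1) := by exact_mod_cast (by omega : #S < 4 * (k + 1))
    linarith [abs_le_wR n]
  calc ((#S : ℝ) / 4) ^ (1 + s) = #S / 4 * (#S / 4 : ℝ) ^ s := by
        rw [Real.rpow_add (by positivity), Real.rpow_one]
    _ ≤ #T * (#S / 4 : ℝ) ^ s := by gcongr
    _ ≤ ∑ n ∈ T, wR n ^ s := by
        rw [← nsmul_eq_mul]
        exact card_nsmul_le_sum T _ _ fun n hn => by gcongr; exact hwT n hn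
    _ ≤ ∑ n ∈ S, wR n ^ s :=
        sum_le_sum_of_subset_of_nonneg (filter_subset _ _) fun n _ _ => wR_rpow_nonneg n s

lemma card_le_of_sum_wR_rpow_le (S : Finset ℤ) {s B : ℝ} (hs : 0 ≤ s)
    (h : ∑ n ∈ S, wR n ^ s ≤ B) : (#S : ℝ) ≤ 4 * B ^ (1 + s)⁻¹ := by
  have hB : 0 ≤ B := (sum_nonneg fun n _ => wR_rpow_nonneg n s).trans h
  have := (Real.le_rpow_inv_iff_of_pos (by positivity) hB (by linarith)).2
    ((card_div_four_rpow_le_sum_wR_rpow S hs).trans h)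
  linarith

lemma sum_wR_rpow_le_of_sum_abs_mul_le (l : ℤ →₀ ℤ) {s B : ℝ}
    (h : ∑ n ∈ l.support, |(l n : ℝ)| * wR n ^ s ≤ B) : ∑ n ∈ l.support, wR n ^ s ≤ B :=
  (sum_le_sum fun n hn =>
    le_mul_of_one_le_left (wR_rpow_nonneg n s) (one_le_abs_apply_of_mem_support hn)).trans h

lemma one_add_sq_mul_pow_four_le {a w s B : ℝ} (hs : 0 < s) (hB : 2 ≤ B) (ha : 1 ≤ |a|)
    (hw : 1 ≤ w) (h : |a| * w ^ s ≤ B) : 1 + a ^ 2 * w ^ 4 ≤ B ^ (3 + 4 / s) := by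
  have hws : 1 ≤ w ^ s := Real.one_le_rpow hw hs.le
  have haB : |a| ≤ B := by nlinarith
  have hwB : w ≤ B ^ s⁻¹ :=
    (Real.le_rpow_inv_iff_of_pos (by linarith) (by linarith) hs).2 (by nlinarith)
  have h1 : 1 ≤ a ^ 2 * w ^ 4 := by
    rw [← sq_abs]
    exact one_le_mul_of_one_le_of_one_le (one_le_pow₀ ha) (one_le_pow₀ hw)
  calc 1 + a ^ 2 * w ^ 4 ≤ B * (|a| ^ 2 * w ^ 4) := by rw [sq_abs]; nlinarith
    _ ≤ B * (B ^ 2 * (B ^ s⁻¹) ^ 4) := by gcongr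
    _ = B ^ (3 + 4 / s) := by
        rw [Real.rpow_add (by linarith), div_eq_inv_mul, ← Real.rpow_mul_natCast (by linarith)]
        norm_cast
        ring

lemma prod_one_add_sq_mul_wR_pow_four_le (l : ℤ →₀ ℤ) {s B : ℝ} (hs : 0 < s) (hB : 2 ≤ B)
    (h : ∑ n ∈ l.support, |(l n : ℝ)| * wR n ^ s ≤ B) :
    ∏ n ∈ l.support, (1 + (l n : ℝ) ^ 2 * wR n ^ 4) ≤ B ^ ((3 + 4 / s) * #l.support) := by
  rw [Real.rpow_mul_natCast (by linarith), ← prod_const]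
  refine prod_le_prod (fun n _ => by positivity) fun n hn =>
    one_add_sq_mul_pow_four_le hs hB (one_le_abs_apply_of_mem_support hn) (one_le_wR n) ?_
  exact (single_le_sum (f := fun m => |(l m : ℝ)| * wR m ^ s)
    (fun m _ => mul_nonneg (abs_nonneg _) (wR_rpow_nonneg m s)) hn).trans h

lemma rpow_mul_log_le_rpow_div {x a b : ℝ} (hx : 0 < x) (hab : a < b) :
    x ^ a * Real.log x ≤ x ^ b / (b - a) := by
  calc x ^ a * Real.log x ≤ x ^ a * (x ^ (b - a) / (b - a)) := by
        gcongr; exact Real.log_le_rpow_div hx.le (sub_pos.2 hab)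
    _ = x ^ b / (b - a) := by rw [mul_div_assoc', ← Real.rpow_add hx, add_sub_cancel]

theorem stmt9 (θ : ℝ) (hθ : θ ∈ Set.Ioo (0:ℝ) 1) :
    ∃ C > (0:ℝ), ∀ γ : ℝ, 0 < γ → ∀ ω : ℤ → ℝ,
      (∀ l : ℤ →₀ ℤ, l ≠ 0 →
        γ * (∏ n ∈ l.support, (1 + (l n : ℝ) ^ 2 * wR n ^ 4))⁻¹
          ≤ distZ (∑ n ∈ l.support, (l n : ℝ) * ω n)) →
      ∀ B : ℝ, 2 ≤ B → ∀ l : ℤ →₀ ℤ, l ≠ 0 →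
        (∑ n ∈ l.support, |(l n : ℝ)| * wR n ^ (θ / 2)) ≤ B →
        γ * Real.exp (-(C * B ^ (3 / (3 + θ))))
          ≤ distZ (∑ n ∈ l.support, (l n : ℝ) * ω n) := by
  obtain ⟨hθ, -⟩ := hθ
  set s := θ / 2
  set e := 3 / (3 + θ)
  set a := (1 + s)⁻¹
  have hae : a < e := by
    simp only [a, e, s]
    rw [inv_eq_one_div, div_lt_div_iff₀ (by positivity) (by positivity)]; linarith
  set C := 4 * (3 + 4 / s) / (e - a) with hC
  refine ⟨C, div_pos (by positivity) (sub_pos.2 hae), ?_⟩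
  intro γ hγ ω hω B hB l hl hsum
  have hcard : (#l.support : ℝ) ≤ 4 * B ^ a :=
    card_le_of_sum_wR_rpow_le _ (by positivity) (sum_wR_rpow_le_of_sum_abs_mul_le l hsum)
  have hexp : Real.log B * ((3 + 4 / s) * #l.support) ≤ C * B ^ e :=
    calc Real.log B * ((3 + 4 / s) * #l.support)
        ≤ 4 * (3 + 4 / s) * (B ^ a * Real.log B) := by
          have hlog := Real.log_nonneg (by linarith : (1:ℝ) ≤ B)
          have hc : 0 ≤ 3 + 4 / s := by positivity
          nlinarith [mul_le_mul_of_nonneg_left hcard (mul_nonneg hc hlog)]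
      _ ≤ 4 * (3 + 4 / s) * (B ^ e / (e - a)) := by
          gcongr; exact rpow_mul_log_le_rpow_div (by linarith) hae
      _ = C * B ^ e := by rw [hC]; ring
  have hprod := (prod_one_add_sq_mul_wR_pow_four_le l (by positivity) hB hsum).trans
    ((Real.rpow_def_of_pos (by linarith) _).trans_le (Real.exp_le_exp.2 hexp))
  calc γ * Real.exp (-(C * B ^ e))
      ≤ γ * (∏ n ∈ l.support, (1 + (l n : ℝ) ^ 2 * wR n ^ 4))⁻¹ := by
        rw [Real.exp_neg]
        gcongr
    _ ≤ distZ (∑ n ∈ l.support, (l n : ℝ) * ω n) := hω l hl
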